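/- Suppose F, G : ℂ → ℂ satisfy F(f_λ(z)) - f_λ'(z)·F(z) = G(z) where f_λ(z) = exp(λz) and G(z) = c·z·f_λ'(z)/λ for a constant c ∈ ℂ. Then for every n ≥ 2 and a ∈ ℂ: F(f_λ^n(a)) = (f_λ^n)'(a) · ( F(a) + a·c/λ + (c/λ²) · ∑_{i=2}^{n} 1/(f_λ^{i-2})'(a) ). -/

import Mathlib

/-- The exponential map `f_λ(z) = exp(λ z)`. -/
noncomputable def expMap (l : ℂ) : ℂ → ℂ := fun z => Complex.exp (l * z)

theorem potential_equation_poincare_series (l : ℂ) (hl : l ≠ 0) (c : ℂ) (F G : ℂ → ℂ)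
    (hG : ∀ z : ℂ, G z = c * z * deriv (expMap l) z / l)
    (hFG : ∀ z : ℂ, F (expMap l z) - deriv (expMap l) z * F z = G z)
    (n : ℕ) (hn : 2 ≤ n) (a : ℂ) :
    F ((expMap l)^[n] a)
      = deriv ((expMap l)^[n]) a *
        (F a + a * c / l +
          (c / l ^ 2) * ∑ i ∈ Finset.Icc 2 n, 1 / deriv ((expMap l)^[i - 2]) a) := by
  have hf : ∀ z : ℂ, HasDerivAt (expMap l) (l * expMap l z) z := by
    intro z
    have h := (Complex.hasDerivAt_exp (l * z)).comp z ((hasDerivAt_id z).const_mul l)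
    show HasDerivAt (fun x => Complex.exp (l * x)) (l * expMap l z) z
    simpa [expMap, mul_comm, Function.comp_def] using h
  have hderiv : ∀ z : ℂ, deriv (expMap l) z = l * expMap l z := fun z => (hf z).deriv
  have hne : ∀ z : ℂ, expMap l z ≠ 0 := fun z => Complex.exp_ne_zero _
  have hiter : ∀ m : ℕ, HasDerivAt ((expMap l)^[m]) (deriv ((expMap l)^[m]) a) a ∧
      deriv ((expMap l)^[m]) a ≠ 0 := by
    intro m
    induction m with
    | zero =>
      simp only [Function.iterate_zero, deriv_id]
      exact ⟨hasDerivAt_id a, one_ne_zero⟩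
    | succ k ih =>
      have h := (hf (((expMap l)^[k]) a)).comp a ih.1
      rw [← Function.iterate_succ'] at h
      refine ⟨h.deriv ▸ h, ?_⟩
      rw [h.deriv]
      exact mul_ne_zero (mul_ne_zero hl (hne _)) ih.2
  have hchain : ∀ m : ℕ, deriv ((expMap l)^[m + 1]) a
      = l * (expMap l)^[m + 1] a * deriv ((expMap l)^[m]) a := by
    intro m
    have h := (hf (((expMap l)^[m]) a)).comp a (hiter m).1
    rw [← Function.iterate_succ'] at h
    rw [h.deriv, Function.iterate_succ_apply']
  induction n, hn using Nat.le_induction with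
  | base =>
    have h0 := hFG a
    have h1 := hFG (expMap l a)
    rw [hG, hderiv] at h0 h1
    set b := expMap l a with hb
    set b2 := expMap l b with hb2
    have h0' : F b = l * b * F a + c * a * b := by
      field_simp at h0
      apply mul_right_cancel₀ hl
      linear_combination l * h0
    have h1' : F b2 = l * b2 * F b + c * b * b2 := by
      field_simp at h1
      apply mul_right_cancel₀ hl
      linear_combination l * h1
    have e2 : ((expMap l)^[2]) a = b2 := by
      simp [hb2, hb, Function.iterate_succ_apply']
    have d2 : deriv ((expMap l)^[2]) a = l * b2 * (l * b) := by
      rw [hchain 1, hchain 0]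
      simp [e2, hb]
    rw [e2, d2, Finset.Icc_self, Finset.sum_singleton]
    simp only [Nat.sub_self, Function.iterate_zero, deriv_id]
    rw [h1', h0']
    field_simp
  | succ m hm ih =>
    obtain ⟨k, rfl⟩ : ∃ k, m = k + 1 := ⟨m - 1, by omega⟩
    have h := hFG (((expMap l)^[k + 1]) a)
    rw [hG, hderiv] at h
    have hpt : expMap l (((expMap l)^[k + 1]) a) = ((expMap l)^[k + 1 + 1]) a :=
      (Function.iterate_succ_apply' _ _ _).symm
    rw [hpt] at h
    have c1 := hchain (k + 1)
    have c0 := hchain k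
    have dk := (hiter k).2
    set D0 := deriv ((expMap l)^[k]) a with hD0
    set D1 := deriv ((expMap l)^[k + 1]) a with hD1
    set E1 := ((expMap l)^[k + 1]) a with hE1
    set E2 := ((expMap l)^[k + 1 + 1]) a with hE2
    set T := ∑ i ∈ Finset.Icc 2 (k + 1), 1 / deriv ((expMap l)^[i - 2]) a with hT
    have hsum : (∑ i ∈ Finset.Icc 2 (k + 1 + 1), 1 / deriv ((expMap l)^[i - 2]) a)
        = T + 1 / D0 := by
      rw [hT, hD0]
      have := Finset.sum_Icc_succ_top (by omega : 2 ≤ k + 1 + 1)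
        (fun i => 1 / deriv ((expMap l)^[i - 2]) a)
      simpa using this
    rw [ih] at h
    have h' : F E2 = l * E2 * (D1 * (F a + a * c / l + c / l ^ 2 * T)) + c * E1 * E2 := by
      field_simp at h
      apply mul_right_cancel₀ hl
      field_simp
      linear_combination h
    rw [hsum, c1, h']
    have key : c * E1 * E2 = l * E2 * D1 * (c / l ^ 2 * (1 / D0)) := by
      field_simp
      linear_combination (-(c * E2)) * c0
    rw [key]
    field_simp
    ring
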